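/- Let n ≥ 1 and let μ_1, …, μ_n be real numbers with −1 < μ_k < 1 for every k. Fix a > −1/2, set μ_{k,a} = μ_k + a(1+μ_k) and A_a(x) = −∫_{−1/(1+2a)}^{x} s·∏_{k=1}^{n}(1 + μ_{k,a}·s) ds, and assume A_a(1) = 0. Then there exists a twice differentiable function u : ℝ → ℝ such that u′(ρ) ∈ (−1/(1+2a), 1) for all ρ, u″(ρ)·∏_{k=1}^{n}(1 + μ_{k,a}·u′(ρ)) = e^{−u(ρ)} for all ρ ∈ ℝ, u′(ρ) → 1 as ρ → +∞, and u′(ρ) → −1/(1+2a) as ρ → −∞. -/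

import Mathlib

open Real MeasureTheory Filter Set
open scoped Topology

/-- `A_a(x) = -∫_{-1/(1+2a)}^{x} s ∏ₖ (1 + μ_{k,a} s) ds`. -/
noncomputable def sasakiA {n : ℕ} (μ : Fin n → ℝ) (a x : ℝ) : ℝ :=
  -∫ s in (-1/(1+2*a))..x, s * ∏ k, (1 + (μ k + a * (1 + μ k)) * s)

noncomputable def sasP {n : ℕ} (μ : Fin n → ℝ) (a s : ℝ) : ℝ :=
  ∏ k, (1 + (μ k + a * (1 + μ k)) * s)

lemma sasP_cont {n : ℕ} (μ : Fin n → ℝ) (a : ℝ) : Continuous (sasP μ a) := by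
  unfold sasP
  exact continuous_finset_prod _ (fun k _ => by fun_prop)

lemma sasP_pos {n : ℕ} {μ : Fin n → ℝ} {a : ℝ} (ha : -1/2 < a)
    (hμ : ∀ k, -1 < μ k ∧ μ k < 1) {s : ℝ} (hs : s ∈ Icc (-1/(1+2*a)) 1) :
    0 < sasP μ a s := by
  have h1 : (0:ℝ) < 1 + 2*a := by linarith
  apply Finset.prod_pos
  intro k _
  obtain ⟨h2, h3⟩ := hμ k
  have hs1 : -1 ≤ s * (1+2*a) := (div_le_iff₀ h1).1 hs.1
  have hs2 : s ≤ 1 := hs.2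
  rcases le_or_gt 0 (μ k + a * (1 + μ k)) with h | h
  · nlinarith [mul_nonneg h (by linarith : (0:ℝ) ≤ s * (1+2*a) + 1)]
  · nlinarith [mul_nonneg (le_of_lt (neg_pos.mpr h)) (by linarith : (0:ℝ) ≤ 1 - s)]

lemma sasInt_cont {n : ℕ} (μ : Fin n → ℝ) (a : ℝ) :
    Continuous (fun s => s * sasP μ a s) := continuous_id.mul (sasP_cont μ a)

lemma sasakiA_hasDerivAt {n : ℕ} (μ : Fin n → ℝ) (a : ℝ) (x : ℝ) :
    HasDerivAt (sasakiA μ a) (-(x * sasP μ a x)) x := by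
  have hc := sasInt_cont μ a
  have h := intervalIntegral.integral_hasDerivAt_right (a := -1/(1+2*a)) (b := x)
    (hc.intervalIntegrable _ _) (hc.stronglyMeasurableAtFilter _ _) hc.continuousAt
  exact h.neg

lemma sasakiA_pos {n : ℕ} {μ : Fin n → ℝ} {a : ℝ} (ha : -1/2 < a)
    (hμ : ∀ k, -1 < μ k ∧ μ k < 1) (hA1 : sasakiA μ a 1 = 0) {x : ℝ}
    (hx : x ∈ Ioo (-1/(1+2*a)) 1) : 0 < sasakiA μ a x := by
  have h1 : (0:ℝ) < 1 + 2*a := by linarith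
  set l : ℝ := -1/(1+2*a) with hl
  have hl0 : l < 0 := by
    rw [hl, neg_div]
    simp only [neg_neg, Left.neg_neg_iff]
    positivity
  have hc := sasInt_cont μ a
  rcases le_or_gt x 0 with hx0 | hx0
  · have : sasakiA μ a x = ∫ s in l..x, -(s * sasP μ a s) := by
      rw [intervalIntegral.integral_neg]; rfl
    rw [this]
    apply intervalIntegral.intervalIntegral_pos_of_pos_on
      (hc.neg.intervalIntegrable _ _)
    · intro s hs
      have hsI : s ∈ Icc l 1 := ⟨hs.1.le, by linarith [hs.2, hx.2]⟩
      have := sasP_pos ha hμ hsI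
      have hs0 : s < 0 := lt_of_lt_of_le hs.2 hx0
      nlinarith [show (-fun s => s * sasP μ a s) s = -(s * sasP μ a s) from rfl]
    · exact hx.1
  · have key : sasakiA μ a x = ∫ s in x..1, s * sasP μ a s := by
      have hi1 : IntervalIntegrable (fun s => s * sasP μ a s) volume l x :=
        hc.intervalIntegrable _ _
      have hi2 : IntervalIntegrable (fun s => s * sasP μ a s) volume x 1 :=
        hc.intervalIntegrable _ _
      have hadd := intervalIntegral.integral_add_adjacent_intervals hi1 hi2
      have h10 : (∫ s in l..(1:ℝ), s * sasP μ a s) = 0 := by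
        have : sasakiA μ a 1 = -∫ s in l..(1:ℝ), s * sasP μ a s := rfl
        rw [this] at hA1; linarith
      have : sasakiA μ a x = -∫ s in l..x, s * sasP μ a s := rfl
      rw [this]; rw [h10] at hadd; linarith
    rw [key]
    apply intervalIntegral.intervalIntegral_pos_of_pos_on (hc.intervalIntegrable _ _)
    · intro s hs
      have hsI : s ∈ Icc l 1 := ⟨by linarith [hs.1, hx.1], hs.2.le⟩
      have := sasP_pos ha hμ hsI
      nlinarith [hs.1, hx0]
    · exact hx.2

lemma sasakiA_eq_neg {n : ℕ} (μ : Fin n → ℝ) (a x : ℝ) :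
    sasakiA μ a x = ∫ s in (-1/(1+2*a))..x, -(s * sasP μ a s) := by
  rw [intervalIntegral.integral_neg]; rfl

lemma sasakiA_eq_right {n : ℕ} (μ : Fin n → ℝ) (a : ℝ) (hA1 : sasakiA μ a 1 = 0) (x : ℝ) :
    sasakiA μ a x = ∫ s in x..1, s * sasP μ a s := by
  have hc := sasInt_cont μ a
  have hi1 : IntervalIntegrable (fun s => s * sasP μ a s) volume (-1/(1+2*a)) x :=
    hc.intervalIntegrable _ _
  have hi2 : IntervalIntegrable (fun s => s * sasP μ a s) volume x 1 :=
    hc.intervalIntegrable _ _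
  have hadd := intervalIntegral.integral_add_adjacent_intervals hi1 hi2
  have h10 : (∫ s in (-1/(1+2*a))..(1:ℝ), s * sasP μ a s) = 0 := by
    have : sasakiA μ a 1 = -∫ s in (-1/(1+2*a))..(1:ℝ), s * sasP μ a s := rfl
    rw [this] at hA1; linarith
  have : sasakiA μ a x = -∫ s in (-1/(1+2*a))..x, s * sasP μ a s := rfl
  rw [this]; rw [h10] at hadd; linarith

theorem exists_solution_ODE (n : ℕ) (hn : 1 ≤ n) (μ : Fin n → ℝ)
    (hμ : ∀ k, -1 < μ k ∧ μ k < 1) (a : ℝ) (ha : -1/2 < a)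
    (hA1 : sasakiA μ a 1 = 0) :
    ∃ u : ℝ → ℝ,
      (∀ ρ : ℝ, DifferentiableAt ℝ u ρ) ∧
      (∀ ρ : ℝ, DifferentiableAt ℝ (deriv u) ρ) ∧
      (∀ ρ : ℝ, deriv u ρ ∈ Set.Ioo (-1/(1+2*a)) (1 : ℝ)) ∧
      (∀ ρ : ℝ, deriv (deriv u) ρ *
          ∏ k, (1 + (μ k + a * (1 + μ k)) * deriv u ρ) = Real.exp (-(u ρ))) ∧
      Tendsto (deriv u) atTop (nhds 1) ∧
      Tendsto (deriv u) atBot (nhds (-1/(1+2*a))) := by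
  have h12 : (0:ℝ) < 1 + 2*a := by linarith
  set l : ℝ := -1/(1+2*a) with hldef
  have hl0 : l < 0 := by
    rw [hldef, neg_div]
    simp only [Left.neg_neg_iff]
    positivity
  have hl1 : l < 1 := hl0.trans one_pos
  have h0mem : (0:ℝ) ∈ Ioo l 1 := ⟨hl0, one_pos⟩
  have hApos : ∀ x ∈ Ioo l 1, 0 < sasakiA μ a x := fun x hx => sasakiA_pos ha hμ hA1 hx
  have hPpos : ∀ x ∈ Icc l 1, 0 < sasP μ a x := fun x hx => sasP_pos ha hμ hx
  have hAcont : Continuous (sasakiA μ a) :=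
    continuous_iff_continuousAt.2 fun x => (sasakiA_hasDerivAt μ a x).continuousAt
  set F : ℝ → ℝ := fun t => sasP μ a t / sasakiA μ a t with hFdef
  have hFcont : ContinuousOn F (Ioo l 1) :=
    ((sasP_cont μ a).continuousOn).div hAcont.continuousOn (fun x hx => (hApos x hx).ne')
  have hFpos : ∀ t ∈ Ioo l 1, 0 < F t := fun t ht =>
    div_pos (hPpos t (Ioo_subset_Icc_self ht)) (hApos t ht)
  have hsub : ∀ x ∈ Ioo l 1, uIcc 0 x ⊆ Ioo l 1 := fun x hx =>
    (ordConnected_Ioo).uIcc_subset h0mem hx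
  have hFint : ∀ x ∈ Ioo l 1, IntervalIntegrable F volume 0 x :=
    fun x hx => (hFcont.mono (hsub x hx)).intervalIntegrable
  set g : ℝ → ℝ := fun x => ∫ t in (0:ℝ)..x, F t with hgdef
  have hg' : ∀ x ∈ Ioo l 1, HasDerivAt g (F x) x := fun x hx =>
    intervalIntegral.integral_hasDerivAt_right (hFint x hx)
      (hFcont.stronglyMeasurableAtFilter isOpen_Ioo x hx)
      (hFcont.continuousAt (isOpen_Ioo.mem_nhds hx))
  have hgcont : ContinuousOn g (Ioo l 1) := fun x hx =>
    (hg' x hx).continuousAt.continuousWithinAt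
  have hgmono : StrictMonoOn g (Ioo l 1) := by
    apply strictMonoOn_of_deriv_pos (convex_Ioo l 1) hgcont
    intro x hx
    rw [interior_Ioo] at hx
    rw [(hg' x hx).deriv]
    exact hFpos x hx
  -- constants m (lower bound for P) and M (bound for |s * P s|)
  obtain ⟨s0, hs0, hminP'⟩ := isCompact_Icc.exists_isMinOn (nonempty_Icc.2 hl1.le)
      (sasP_cont μ a).continuousOn
  have hminP : ∀ t ∈ Icc l 1, sasP μ a s0 ≤ sasP μ a t := fun t ht => hminP' ht
  set m : ℝ := sasP μ a s0 with hmdef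
  have hm : 0 < m := hPpos s0 hs0
  obtain ⟨M0, hM0⟩ := isCompact_Icc.exists_bound_of_continuousOn (sasInt_cont μ a).continuousOn
  set M : ℝ := max M0 1 with hMdef
  have hM : 0 < M := lt_of_lt_of_le one_pos (le_max_right _ _)
  have hMb : ∀ s ∈ Icc l 1, |s * sasP μ a s| ≤ M := fun s hs =>
    le_trans (by simpa [Real.norm_eq_abs, abs_mul] using hM0 s hs) (le_max_left _ _)
  -- upper bounds for A near the endpoints
  have hAup1 : ∀ x ∈ Ico (0:ℝ) 1, sasakiA μ a x ≤ M * (1 - x) := by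
    intro x hx
    rw [sasakiA_eq_right μ a hA1 x]
    have hint : IntervalIntegrable (fun s => s * sasP μ a s) volume x 1 :=
      (sasInt_cont μ a).intervalIntegrable _ _
    have hconst : IntervalIntegrable (fun _ : ℝ => M) volume x 1 := intervalIntegrable_const
    calc (∫ s in x..1, s * sasP μ a s) ≤ ∫ _ in x..1, M := by
          apply intervalIntegral.integral_mono_on hx.2.le hint hconst
          intro s hs
          have hsI : s ∈ Icc l 1 := ⟨le_trans hl0.le (le_trans hx.1 hs.1), hs.2⟩
          exact le_trans (le_abs_self _) (hMb s hsI)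
      _ = M * (1 - x) := by
          rw [intervalIntegral.integral_const]
          simp [smul_eq_mul]; ring
  have hAup2 : ∀ x ∈ Ioc l 0, sasakiA μ a x ≤ M * (x - l) := by
    intro x hx
    rw [sasakiA_eq_neg μ a x, ← hldef]
    have hint : IntervalIntegrable (fun s => -(s * sasP μ a s)) volume l x :=
      ((sasInt_cont μ a).neg).intervalIntegrable _ _
    have hconst : IntervalIntegrable (fun _ : ℝ => M) volume l x := intervalIntegrable_const
    calc (∫ s in l..x, -(s * sasP μ a s)) ≤ ∫ _ in l..x, M := by
          apply intervalIntegral.integral_mono_on hx.1.le hint hconst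
          intro s hs
          have hsI : s ∈ Icc l 1 := ⟨hs.1, le_trans hs.2 (le_trans hx.2 one_pos.le)⟩
          exact le_trans (neg_le_abs _) (by simpa [abs_neg] using hMb s hsI)
      _ = M * (x - l) := by
          rw [intervalIntegral.integral_const]
          simp [smul_eq_mul]; ring
  -- lower bounds for F near the endpoints
  have hFlow1 : ∀ t ∈ Ico (0:ℝ) 1, m / M * (1 / (1 - t)) ≤ F t := by
    intro t ht
    have htI : t ∈ Ioo l 1 := ⟨lt_of_lt_of_le hl0 ht.1, ht.2⟩
    have hA := hApos t htI
    have h1t : 0 < 1 - t := by linarith [ht.2]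
    have hup := hAup1 t ht
    calc m / M * (1 / (1 - t)) = m / (M * (1 - t)) := by
          rw [div_mul_div_comm, mul_one]
      _ ≤ m / sasakiA μ a t := by gcongr
      _ ≤ sasP μ a t / sasakiA μ a t := by
          gcongr
          exact hminP t (Ioo_subset_Icc_self htI)
      _ = F t := rfl
  have hFlow2 : ∀ t ∈ Ioc l 0, m / M * (1 / (t - l)) ≤ F t := by
    intro t ht
    have htI : t ∈ Ioo l 1 := ⟨ht.1, lt_of_le_of_lt ht.2 one_pos⟩
    have hA := hApos t htI
    have h1t : 0 < t - l := by linarith [ht.1]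
    have hup := hAup2 t ht
    calc m / M * (1 / (t - l)) = m / (M * (t - l)) := by
          rw [div_mul_div_comm, mul_one]
      _ ≤ m / sasakiA μ a t := by gcongr
      _ ≤ sasP μ a t / sasakiA μ a t := by
          gcongr
          exact hminP t (Ioo_subset_Icc_self htI)
      _ = F t := rfl
  -- divergence of g at the right endpoint
  have hglow : ∀ x ∈ Ico (0:ℝ) 1, -(m / M * Real.log (1 - x)) ≤ g x := by
    intro x hx
    have hxI : x ∈ Ioo l 1 := ⟨lt_of_lt_of_le hl0 hx.1, hx.2⟩
    have hDer : ∀ t ∈ uIcc (0:ℝ) x,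
        HasDerivAt (fun t => -(m / M * Real.log (1 - t))) (m / M * (1 / (1 - t))) t := by
      intro t ht
      rw [uIcc_of_le hx.1] at ht
      have h1t : (1:ℝ) - t ≠ 0 := by
        have := lt_of_le_of_lt ht.2 hx.2
        intro h; rw [sub_eq_zero] at h; exact absurd h.symm this.ne
      have hin : HasDerivAt (fun t : ℝ => 1 - t) (-1) t := (hasDerivAt_id t).const_sub 1
      have hlog := hin.log h1t
      have h2 := (hlog.const_mul (m / M)).neg
      refine h2.congr_deriv ?_
      field_simp
    have hcont2 : ContinuousOn (fun t => m / M * (1 / (1 - t))) (uIcc (0:ℝ) x) := by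
      rw [uIcc_of_le hx.1]
      apply ContinuousOn.mul continuousOn_const
      apply ContinuousOn.div continuousOn_const (by fun_prop)
      intro t ht
      have := lt_of_le_of_lt ht.2 hx.2
      intro h; rw [sub_eq_zero] at h; exact absurd h.symm this.ne
    have hint2 : IntervalIntegrable (fun t => m / M * (1 / (1 - t))) volume 0 x :=
      hcont2.intervalIntegrable
    have heq : (∫ t in (0:ℝ)..x, m / M * (1 / (1 - t))) = -(m / M * Real.log (1 - x)) := by
      rw [intervalIntegral.integral_eq_sub_of_hasDerivAt hDer hint2]
      simp
    rw [← heq, hgdef]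
    apply intervalIntegral.integral_mono_on hx.1 hint2 (hFint x hxI)
    intro t ht
    exact hFlow1 t ⟨ht.1, lt_of_le_of_lt ht.2 hx.2⟩
  have htop : Tendsto g (𝓝[<] (1:ℝ)) atTop := by
    have hIco : Ico (0:ℝ) 1 ∈ 𝓝[<] (1:ℝ) :=
      mem_of_superset (Ioo_mem_nhdsLT_of_mem ⟨one_pos, le_refl (1:ℝ)⟩) Ioo_subset_Ico_self
    have h1 : Tendsto (fun x : ℝ => 1 - x) (𝓝[<] (1:ℝ)) (𝓝[>] (0:ℝ)) := by
      rw [tendsto_nhdsWithin_iff]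
      constructor
      · have hc : Tendsto (fun x : ℝ => 1 - x) (𝓝 (1:ℝ)) (𝓝 (0:ℝ)) := by
          have hcc : Continuous (fun x : ℝ => 1 - x) := by fun_prop
          simpa using hcc.tendsto 1
        exact hc.mono_left nhdsWithin_le_nhds
      · filter_upwards [self_mem_nhdsWithin] with x hx
        simp only [mem_Iio] at hx
        simpa using hx
    have h2 : Tendsto (fun x : ℝ => Real.log (1 - x)) (𝓝[<] (1:ℝ)) atBot :=
      Real.tendsto_log_nhdsGT_zero.comp h1
    have h3 : Tendsto (fun x : ℝ => -(m / M * Real.log (1 - x))) (𝓝[<] (1:ℝ)) atTop := by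
      have : (fun x : ℝ => -(m / M * Real.log (1 - x)))
          = fun x => (-(m / M)) * Real.log (1 - x) := by funext x; ring
      rw [this]
      refine (tendsto_const_mul_atTop_of_neg ?_).2 h2
      simp only [neg_neg, Left.neg_neg_iff]
      positivity
    exact tendsto_atTop_mono' _ (eventually_of_mem hIco hglow) h3
  -- divergence of g at the left endpoint
  have hgup : ∀ x ∈ Ioc l 0, g x ≤ m / M * Real.log (x - l) - m / M * Real.log (0 - l) := by
    intro x hx
    have hxI : x ∈ Ioo l 1 := ⟨hx.1, lt_of_le_of_lt hx.2 one_pos⟩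
    have hDer : ∀ t ∈ uIcc x (0:ℝ),
        HasDerivAt (fun t => m / M * Real.log (t - l)) (m / M * (1 / (t - l))) t := by
      intro t ht
      rw [uIcc_of_le hx.2] at ht
      have h1t : t - l ≠ 0 := by
        have := lt_of_lt_of_le hx.1 ht.1
        intro h; rw [sub_eq_zero] at h; exact absurd h this.ne'
      have hin : HasDerivAt (fun t : ℝ => t - l) 1 t := by
        simpa using (hasDerivAt_id t).sub_const l
      have hlog := hin.log h1t
      have h2 := hlog.const_mul (m / M)
      exact h2
    have hcont2 : ContinuousOn (fun t => m / M * (1 / (t - l))) (uIcc x (0:ℝ)) := by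
      rw [uIcc_of_le hx.2]
      apply ContinuousOn.mul continuousOn_const
      apply ContinuousOn.div continuousOn_const (by fun_prop)
      intro t ht
      have := lt_of_lt_of_le hx.1 ht.1
      intro h; rw [sub_eq_zero] at h; exact absurd h this.ne'
    have hint2 : IntervalIntegrable (fun t => m / M * (1 / (t - l))) volume x 0 :=
      hcont2.intervalIntegrable
    have heq : (∫ t in x..(0:ℝ), m / M * (1 / (t - l)))
        = m / M * Real.log (0 - l) - m / M * Real.log (x - l) := by
      rw [intervalIntegral.integral_eq_sub_of_hasDerivAt hDer hint2]
    have hFint0 : IntervalIntegrable F volume x 0 := by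
      apply (hFcont.mono ((ordConnected_Ioo).uIcc_subset hxI h0mem)).intervalIntegrable
    have hmono := intervalIntegral.integral_mono_on hx.2 hint2 hFint0 (fun t ht =>
      hFlow2 t ⟨lt_of_lt_of_le hx.1 ht.1, ht.2⟩)
    rw [heq] at hmono
    have hgx : g x = -∫ t in x..(0:ℝ), F t := by
      rw [hgdef]
      simp only
      rw [intervalIntegral.integral_symm]
    rw [hgx]
    linarith
  have hbot : Tendsto g (𝓝[>] l) atBot := by
    have hIoc : Ioc l 0 ∈ 𝓝[>] l :=
      mem_of_superset (Ioo_mem_nhdsGT_of_mem ⟨le_refl l, hl0⟩) Ioo_subset_Ioc_self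
    have h1 : Tendsto (fun x : ℝ => x - l) (𝓝[>] l) (𝓝[>] (0:ℝ)) := by
      rw [tendsto_nhdsWithin_iff]
      constructor
      · have hc : Tendsto (fun x : ℝ => x - l) (𝓝 l) (𝓝 (0:ℝ)) := by
          have hcc : Continuous (fun x : ℝ => x - l) := by fun_prop
          simpa using hcc.tendsto l
        exact hc.mono_left nhdsWithin_le_nhds
      · filter_upwards [self_mem_nhdsWithin] with x hx
        simp only [mem_Ioi] at hx
        simpa [sub_pos] using hx
    have h2 : Tendsto (fun x : ℝ => Real.log (x - l)) (𝓝[>] l) atBot :=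
      Real.tendsto_log_nhdsGT_zero.comp h1
    have h3 : Tendsto (fun x : ℝ => m / M * Real.log (x - l) - m / M * Real.log (0 - l))
        (𝓝[>] l) atBot := by
      apply tendsto_atBot_add_const_right
      exact (tendsto_const_mul_atBot_of_pos (by positivity)).2 h2
    exact tendsto_atBot_mono' _ (eventually_of_mem hIoc hgup) h3
  -- surjectivity of g onto ℝ
  have hsurj : ∀ y : ℝ, ∃ x, x ∈ Ioo l 1 ∧ g x = y := by
    intro y
    have hIooTop : Ioo l 1 ∈ 𝓝[<] (1:ℝ) := Ioo_mem_nhdsLT_of_mem ⟨hl1, le_refl (1:ℝ)⟩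
    have hIooBot : Ioo l 1 ∈ 𝓝[>] l := Ioo_mem_nhdsGT_of_mem ⟨le_refl l, hl1⟩
    obtain ⟨x2, hx2g, hx2I⟩ :=
      ((htop.eventually (eventually_gt_atTop y)).and
        (eventually_of_mem hIooTop (fun _ h => h))).exists
    obtain ⟨x1, hx1g, hx1I⟩ :=
      ((hbot.eventually (eventually_lt_atBot y)).and
        (eventually_of_mem hIooBot (fun _ h => h))).exists
    have hx12 : x1 ≤ x2 := by
      by_contra h
      push_neg at h
      have := hgmono hx2I hx1I h
      linarith
    have hIccsub : Icc x1 x2 ⊆ Ioo l 1 := fun z hz => ⟨lt_of_lt_of_le hx1I.1 hz.1,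
      lt_of_le_of_lt hz.2 hx2I.2⟩
    obtain ⟨x, hxmem, hgx⟩ := intermediate_value_Icc hx12 (hgcont.mono hIccsub)
      ⟨hx1g.le, hx2g.le⟩
    exact ⟨x, hIccsub hxmem, hgx⟩
  choose v hvmem hgv using hsurj
  have hinj : ∀ ⦃x⦄, x ∈ Ioo l 1 → v (g x) = x := fun x hx =>
    hgmono.injOn (hvmem (g x)) hx (hgv (g x))
  have hvmono : StrictMono v := by
    intro y1 y2 h
    have hiff := hgmono.lt_iff_lt (hvmem y1) (hvmem y2)
    rw [hgv, hgv] at hiff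
    exact hiff.1 h
  have hrange : range v = Ioo l 1 := by
    apply Subset.antisymm
    · rintro _ ⟨y, rfl⟩; exact hvmem y
    · intro x hx; exact ⟨g x, hinj hx⟩
  have hvcont : ∀ y, ContinuousAt v y := by
    intro y
    apply StrictMonoOn.continuousAt_of_image_mem_nhds (hvmono.strictMonoOn univ) univ_mem
    rw [image_univ, hrange]
    exact isOpen_Ioo.mem_nhds (hvmem y)
  have hv' : ∀ y, HasDerivAt v (sasakiA μ a (v y) / sasP μ a (v y)) y := by
    intro y
    have hF := hg' (v y) (hvmem y)
    have h := HasDerivAt.of_local_left_inverse (hvcont y) hF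
      (ne_of_gt (hFpos _ (hvmem y))) (Eventually.of_forall hgv)
    refine h.congr_deriv ?_
    rw [hFdef]
    simp only
    rw [inv_div]
  set u : ℝ → ℝ := fun y => -Real.log (sasakiA μ a (v y)) with hudef
  have hu' : ∀ y, HasDerivAt u (v y) y := by
    intro y
    have hAne : sasakiA μ a (v y) ≠ 0 := (hApos _ (hvmem y)).ne'
    have hPne : sasP μ a (v y) ≠ 0 := (hPpos _ (Ioo_subset_Icc_self (hvmem y))).ne'
    have hAv : HasDerivAt (fun y => sasakiA μ a (v y))
        (-(v y * sasP μ a (v y)) * (sasakiA μ a (v y) / sasP μ a (v y))) y :=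
      (sasakiA_hasDerivAt μ a (v y)).comp y (hv' y)
    have hlog := (hAv.log hAne).neg
    refine hlog.congr_deriv ?_
    field_simp
  have hderivu : deriv u = v := funext fun y => (hu' y).deriv
  refine ⟨u, fun ρ => (hu' ρ).differentiableAt, ?_, ?_, ?_, ?_, ?_⟩
  · intro ρ; rw [hderivu]; exact (hv' ρ).differentiableAt
  · intro ρ; rw [hderivu]; exact hvmem ρ
  · intro ρ
    rw [hderivu]
    rw [(hv' ρ).deriv]
    have hPne : sasP μ a (v ρ) ≠ 0 := (hPpos _ (Ioo_subset_Icc_self (hvmem ρ))).ne'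
    have hprod : (∏ k, (1 + (μ k + a * (1 + μ k)) * v ρ)) = sasP μ a (v ρ) := rfl
    rw [hprod, div_mul_cancel₀ _ hPne, hudef]
    simp only
    rw [neg_neg, Real.exp_log (hApos _ (hvmem ρ))]
  · rw [hderivu]
    have hbdd : BddAbove (range v) := by rw [hrange]; exact bddAbove_Ioo
    have htend := tendsto_atTop_ciSup hvmono.monotone hbdd
    have hsup : ⨆ y, v y = 1 := by
      have h1 : ⨆ y, v y = sSup (Ioo l 1) := by rw [← hrange]; rfl
      rw [h1, csSup_Ioo hl1]
    rwa [hsup] at htend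
  · rw [hderivu]
    have hbdd : BddBelow (range v) := by rw [hrange]; exact bddBelow_Ioo
    have htend := tendsto_atBot_ciInf hvmono.monotone hbdd
    have hinf : ⨅ y, v y = l := by
      have h1 : ⨅ y, v y = sInf (Ioo l 1) := by rw [← hrange]; rfl
      rw [h1, csInf_Ioo hl1]
    rwa [hinf] at htend
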